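/- Let g = ⊕_{i ≥ -h} g_i be a transitive, irreducible Z-graded Lie algebra with g_{-i} = g_{-1}^i for i ≥ 1 and g generated by its local part. If σ is a grading-preserving Hom-Lie algebra structure on g with σ|_{g_0 ⊕ g_{-1}} = id, then σ = id on all of g. -/

import Mathlib

/-! σ is multiplicative, so fixing `g₋₁` forces it to fix every `g₋ᵢ = g₋₁ⁱ`. In nonnegative
degree, subtracting the Jacobi identity from the Hom-Jacobi identity shows that `σ x - x`
commutes with every `⁅a, b⁆` where `σ` fixes `a` and `b`; by irreducibility these span `g₋₁`,
so `σ x - x = 0` by transitivity. -/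

open Submodule LinearMap

section HomLie

variable {R L : Type*} [CommRing R] [LieRing L] [LieAlgebra R L] {σ : L →ₗ[R] L}

theorem span_lie_le_eqLocus_id (hmul : ∀ x y : L, σ ⁅x, y⁆ = ⁅σ x, σ y⁆)
    {A B : Submodule R L} (hA : A ≤ eqLocus σ id) (hB : B ≤ eqLocus σ id) :
    span R {z : L | ∃ x ∈ A, ∃ y ∈ B, z = ⁅x, y⁆} ≤ eqLocus σ id := by
  refine span_le.mpr ?_
  rintro _ ⟨a, ha, b, hb, rfl⟩
  change σ ⁅a, b⁆ = ⁅a, b⁆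
  rw [hmul, hA ha, hB hb, id_apply, id_apply]

theorem lie_sub_self_lie_eq_zero
    (hjac : ∀ x y z : L, ⁅σ x, ⁅y, z⁆⁆ + ⁅σ y, ⁅z, x⁆⁆ + ⁅σ z, ⁅x, y⁆⁆ = 0)
    {a b : L} (ha : σ a = a) (hb : σ b = b) (x : L) : ⁅σ x - x, ⁅a, b⁆⁆ = 0 := by
  have hdiff := congr($(hjac x a b) - $(lie_jacobi x a b))
  rw [ha, hb] at hdiff
  rw [sub_lie]
  convert hdiff using 1 <;> abel

theorem span_lie_le_ker_ad_sub_self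
    (hjac : ∀ x y z : L, ⁅σ x, ⁅y, z⁆⁆ + ⁅σ y, ⁅z, x⁆⁆ + ⁅σ z, ⁅x, y⁆⁆ = 0)
    {A B : Submodule R L} (hA : A ≤ eqLocus σ id) (hB : B ≤ eqLocus σ id) (x : L) :
    span R {z : L | ∃ x ∈ A, ∃ y ∈ B, z = ⁅x, y⁆} ≤ ker (LieAlgebra.ad R L (σ x - x)) := by
  refine span_le.mpr ?_
  rintro _ ⟨a, ha, b, hb, rfl⟩
  exact lie_sub_self_lie_eq_zero hjac (hA ha) (hB hb) x

end HomLie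

section Graded

variable {K L : Type*} [Field K] [LieRing L] [LieAlgebra K L] {σ : L →ₗ[K] L}
  (g : ℤ → Submodule K L)

theorem neg_le_eqLocus_id (hmul : ∀ x y : L, σ ⁅x, y⁆ = ⁅σ x, σ y⁆)
    (hgen : ∀ i : ℕ, 2 ≤ i →
      g (-(i : ℤ)) = span K {z : L | ∃ x ∈ g (-1), ∃ y ∈ g (-(i : ℤ) + 1), z = ⁅x, y⁆})
    (hid1 : g (-1) ≤ eqLocus σ id) (n : ℕ) (hn : 1 ≤ n) : g (-(n : ℤ)) ≤ eqLocus σ id := by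
  induction n, hn using Nat.le_induction with
  | base => simpa using hid1
  | succ n hn ih =>
    have hprev : -((n + 1 : ℕ) : ℤ) + 1 = -(n : ℤ) := by push_cast; ring
    rw [hgen (n + 1) (by omega), hprev]
    exact span_lie_le_eqLocus_id hmul hid1 ih

theorem nonneg_le_eqLocus_id
    (htrans : ∀ i : ℤ, 0 ≤ i → ∀ x ∈ g i, (∀ y ∈ g (-1), ⁅x, y⁆ = 0) → x = 0)
    (hirr : g (-1) = span K {z : L | ∃ x ∈ g 0, ∃ y ∈ g (-1), z = ⁅x, y⁆})
    (hjac : ∀ x y z : L, ⁅σ x, ⁅y, z⁆⁆ + ⁅σ y, ⁅z, x⁆⁆ + ⁅σ z, ⁅x, y⁆⁆ = 0)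
    (hpres : ∀ i : ℤ, ∀ x ∈ g i, σ x ∈ g i)
    (hid0 : g 0 ≤ eqLocus σ id) (hid1 : g (-1) ≤ eqLocus σ id) (i : ℤ) (hi : 0 ≤ i) :
    g i ≤ eqLocus σ id := by
  intro x hx
  have hcomm : g (-1) ≤ ker (LieAlgebra.ad K L (σ x - x)) := by
    rw [hirr]
    exact span_lie_le_ker_ad_sub_self hjac hid0 hid1 x
  exact sub_eq_zero.mp (htrans i hi _ (sub_mem (hpres i x hx) hx) hcomm)

end Graded

theorem stmt4_general {K L : Type*} [Field K] [LieRing L] [LieAlgebra K L]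
    (g : ℤ → Submodule K L)
    (hint : DirectSum.IsInternal g)
    (htrans : ∀ i : ℤ, 0 ≤ i → ∀ x ∈ g i, (∀ y ∈ g (-1), ⁅x, y⁆ = 0) → x = 0)
    (hgen : ∀ i : ℕ, 2 ≤ i →
      g (-(i : ℤ)) = Submodule.span K
        {z : L | ∃ x ∈ g (-1), ∃ y ∈ g (-(i : ℤ) + 1), z = ⁅x, y⁆})
    (hirr : g (-1) = Submodule.span K
      {z : L | ∃ x ∈ g 0, ∃ y ∈ g (-1), z = ⁅x, y⁆})
    (σ : L →ₗ[K] L)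
    (hmul : ∀ x y : L, σ ⁅x, y⁆ = ⁅σ x, σ y⁆)
    (hjac : ∀ x y z : L, ⁅σ x, ⁅y, z⁆⁆ + ⁅σ y, ⁅z, x⁆⁆ + ⁅σ z, ⁅x, y⁆⁆ = 0)
    (hpres : ∀ i : ℤ, ∀ x ∈ g i, σ x ∈ g i)
    (hid0 : ∀ x ∈ g 0, σ x = x) (hid1 : ∀ x ∈ g (-1), σ x = x) :
    ∀ x : L, σ x = x := by
  have hall : ∀ i, g i ≤ eqLocus σ id := by
    intro i
    obtain hi | hi := le_or_gt 0 i
    · exact nonneg_le_eqLocus_id g htrans hirr hjac hpres hid0 hid1 i hi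
    · obtain ⟨n, rfl⟩ : ∃ n : ℕ, i = -(n : ℤ) := ⟨i.natAbs, by omega⟩
      exact neg_le_eqLocus_id g hmul hgen hid1 n (by omega)
  have htop : eqLocus σ id = ⊤ :=
    top_unique (hint.submodule_iSup_eq_top ▸ iSup_le hall)
  intro x
  exact (htop ▸ mem_top : x ∈ eqLocus σ id)

/-- If a grading-preserving Hom-Lie structure on a transitive irreducible `ℤ`-graded Lie
algebra, with `g₋ᵢ = g₋₁ⁱ`, is the identity on `g₀ ⊕ g₋₁`, then it is the identity. -/
theorem stmt4 {K L : Type*} [Field K] [LieRing L] [LieAlgebra K L]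
    (g : ℤ → Submodule K L) (h : ℕ)
    (hint : DirectSum.IsInternal g)
    (hlow : ∀ i : ℤ, i < -(h : ℤ) → g i = ⊥)
    (hgrade : ∀ i j : ℤ, ∀ x ∈ g i, ∀ y ∈ g j, ⁅x, y⁆ ∈ g (i + j))
    (htrans : ∀ i : ℤ, 0 ≤ i → ∀ x ∈ g i, (∀ y ∈ g (-1), ⁅x, y⁆ = 0) → x = 0)
    (hgen : ∀ i : ℕ, 2 ≤ i →
      g (-(i : ℤ)) = Submodule.span K
        {z : L | ∃ x ∈ g (-1), ∃ y ∈ g (-(i : ℤ) + 1), z = ⁅x, y⁆})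
    (hirr : g (-1) = Submodule.span K
      {z : L | ∃ x ∈ g 0, ∃ y ∈ g (-1), z = ⁅x, y⁆})
    (σ : L →ₗ[K] L)
    (hmul : ∀ x y : L, σ ⁅x, y⁆ = ⁅σ x, σ y⁆)
    (hjac : ∀ x y z : L, ⁅σ x, ⁅y, z⁆⁆ + ⁅σ y, ⁅z, x⁆⁆ + ⁅σ z, ⁅x, y⁆⁆ = 0)
    (hpres : ∀ i : ℤ, ∀ x ∈ g i, σ x ∈ g i)
    (hid0 : ∀ x ∈ g 0, σ x = x) (hid1 : ∀ x ∈ g (-1), σ x = x) :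
    ∀ x : L, σ x = x :=
  stmt4_general g hint htrans hgen hirr σ hmul hjac hpres hid0 hid1
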